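/- Let y and ŷ¹,…,ŷᴹ be nonzero vectors in ℝᴺ, let a₁,…,a_M be strictly positive real weights with ∑_{m=1}^{M} a_m = 1, and let ȳ_(a) = ∑_{m=1}^{M} a_m · ŷᵐ/‖ŷᵐ‖₂ be nonzero. Assume the base forecasts are distinct, i.e. ŷⁱ/‖ŷⁱ‖₂ ≠ ŷʲ/‖ŷʲ‖₂ for some i ≠ j, and that the weighted average of the base skills is strictly positive: ∑_{m=1}^{M} a_m · sim(ŷᵐ, y) > 0. Then the inequality is strict: ∑_{m=1}^{M} a_m · sim(ŷᵐ, y) < sim(ȳ_(a), y), where sim(u, v) = ⟨u, v⟩ / (‖u‖₂ ‖v‖₂) denotes cosine similarity. -/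

import Mathlib

open Finset

noncomputable def sim {N : ℕ} (u v : EuclideanSpace ℝ (Fin N)) : ℝ :=
  (inner ℝ u v : ℝ) / (‖u‖ * ‖v‖)

/-! The weighted mean of the base skills is `⟪ȳ, y⟫ / ‖y‖`, by linearity of the inner product,
whereas `sim ȳ y = ⟪ȳ, y⟫ / (‖ȳ‖ ‖y‖)`. Since `ȳ` is a convex combination, with positive weights,
of points of the closed unit ball not all equal, strict convexity of the Euclidean ball gives
`‖ȳ‖ < 1`, so dividing the positive number `⟪ȳ, y⟫ / ‖y‖` by `‖ȳ‖` strictly increases it. -/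

theorem norm_inv_norm_smul_le_one {E : Type*} [NormedAddCommGroup E] [NormedSpace ℝ E] (x : E) :
    ‖‖x‖⁻¹ • x‖ ≤ 1 := by
  rcases eq_or_ne x 0 with rfl | hx
  · simp
  · exact (norm_smul_inv_norm hx).le

section Skill

variable {N : ℕ}

theorem sim_eq_inner_div_norm (x y : EuclideanSpace ℝ (Fin N)) :
    sim x y = inner ℝ (‖x‖⁻¹ • x) y / ‖y‖ := by
  rw [sim, real_inner_smul_left]
  ring

theorem sum_mul_sim_eq_inner_div_norm {ι : Type*} (s : Finset ι) (a : ι → ℝ)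
    (x : ι → EuclideanSpace ℝ (Fin N)) (y : EuclideanSpace ℝ (Fin N)) :
    ∑ m ∈ s, a m * sim (x m) y = inner ℝ (∑ m ∈ s, a m • (‖x m‖⁻¹ • x m)) y / ‖y‖ := by
  simp only [sim_eq_inner_div_norm, sum_inner, real_inner_smul_left, sum_div, mul_div_assoc]

theorem inner_div_norm_lt_sim {w y : EuclideanSpace ℝ (Fin N)} (hw : ‖w‖ < 1)
    (hpos : 0 < inner ℝ w y / ‖y‖) : inner ℝ w y / ‖y‖ < sim w y := by
  have hy : 0 < ‖y‖ := by
    refine norm_pos_iff.mpr fun hy => ?_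
    simp [hy] at hpos
  have hinner : 0 < inner ℝ w y := (div_pos_iff_of_pos_right hy).mp hpos
  have hw0 : 0 < ‖w‖ := norm_pos_iff.mpr fun hw0 => by simp [hw0] at hinner
  rw [sim]
  exact div_lt_div_of_pos_left hinner (by positivity) (mul_lt_of_lt_one_left hy hw)

end Skill

theorem l2_ensemble_skill_strict_general
    {N M : ℕ} (y : EuclideanSpace ℝ (Fin N)) (yhat : Fin M → EuclideanSpace ℝ (Fin N))
    (a : Fin M → ℝ)
    (ha : ∀ m, 0 < a m) (hsum : ∑ m, a m = 1)
    (i j : Fin M)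
    (hdist : ‖yhat i‖⁻¹ • yhat i ≠ ‖yhat j‖⁻¹ • yhat j)
    (hpos : 0 < ∑ m, a m * sim (yhat m) y) :
    ∑ m, a m * sim (yhat m) y < sim (∑ m, a m • (‖yhat m‖⁻¹ • yhat m)) y := by
  have hnorm : ‖∑ m, a m • (‖yhat m‖⁻¹ • yhat m)‖ < 1 := by
    simpa using sum_mem_ball_of_strictConvexSpace (p := 0) (r := 1)
      (fun m _ => (ha m).le) hsum (mem_univ i) (mem_univ j) hdist (ha i).ne' (ha j).ne'
      (fun m _ => mem_closedBall_zero_iff.mpr (norm_inv_norm_smul_le_one (yhat m)))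
  rw [sum_mul_sim_eq_inner_div_norm] at hpos ⊢
  exact inner_div_norm_lt_sim hnorm hpos

theorem l2_ensemble_skill_strict
    {N M : ℕ} (y : EuclideanSpace ℝ (Fin N)) (yhat : Fin M → EuclideanSpace ℝ (Fin N))
    (a : Fin M → ℝ)
    (hy : y ≠ 0) (hyhat : ∀ m, yhat m ≠ 0)
    (ha : ∀ m, 0 < a m) (hsum : ∑ m, a m = 1)
    (hens : ∑ m, a m • (‖yhat m‖⁻¹ • yhat m) ≠ 0)
    (i j : Fin M) (hij : i ≠ j)
    (hdist : ‖yhat i‖⁻¹ • yhat i ≠ ‖yhat j‖⁻¹ • yhat j)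
    (hpos : 0 < ∑ m, a m * sim (yhat m) y) :
    ∑ m, a m * sim (yhat m) y < sim (∑ m, a m • (‖yhat m‖⁻¹ • yhat m)) y :=
  l2_ensemble_skill_strict_general y yhat a ha hsum i j hdist hpos
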